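/- Infimum of modulus controlled by energy and momentum: if v ∈ X¹ vanishes nowhere and p(v) ≠ 0, then inf_{x∈ℝ} |v(x)| ≤ E(v) / (√2 |p(v)|). In particular, if δ(v) = 1 − E(v)/(√2|p(v)|) > 0, then for any 0 < δ < δ(v) there exists x_δ ∈ ℝ with 1 − |v(x_δ)| ≥ δ. -/

import Mathlib

open MeasureTheory Filter Set Topology Real

/-!
Write `v = ρ e^{iφ}`, so that `|v'|² = ρ'² + ρ²φ'²` and `m := inf |v| ≤ |ρ|` everywhere.
Pointwise, `m |(ρ² - 1) φ'| ≤ |ρφ'| |1 - ρ²|`, and the AM-GM inequality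
`√2 a b ≤ a² + b²/2` bounds `(√2/2) m |(ρ² - 1) φ'|` by the energy density
`|v'|²/2 + (1 - |v|²)²/4`. Integrating gives `√2 m |p(v)| ≤ E(v)`.
-/

noncomputable section

/-- Real inner product on `ℂ`: `⟨z, w⟩ = Re (z̄ w)`. -/
def rInner (z w : ℂ) : ℝ := ((starRingEnd ℂ) z * w).re

/-- Membership in the energy space `X¹`. -/
structure InX1 (w : ℝ → ℂ) : Prop where
  bdd : ∃ C, ∀ x, ‖w x‖ ≤ C
  diff : Differentiable ℝ w
  deriv_memL2 : MemLp (deriv w) 2 volume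
  gl_memL2 : MemLp (fun x => (1 : ℝ) - ‖w x‖ ^ 2) 2 volume

/-- Membership in `Z¹`: `X¹` together with limits at `±∞`. -/
def InZ1 (w : ℝ → ℂ) : Prop :=
  InX1 w ∧ (∃ l, Tendsto w atTop (nhds l)) ∧ (∃ l, Tendsto w atBot (nhds l))

/-- The Ginzburg-Landau energy. -/
def energy (w : ℝ → ℂ) : ℝ :=
  (1 / 2) * (∫ x, ‖deriv w x‖ ^ 2) + (1 / 4) * ∫ x, ((1 : ℝ) - ‖w x‖ ^ 2) ^ 2

/-- The black soliton `𝔳₀(x) = tanh (x / √2)`. -/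
def blackSoliton (x : ℝ) : ℂ := (Real.tanh (x / Real.sqrt 2) : ℝ)

/-- The truncated momentum `P_R(v) = (1/2) ∫_{-R}^R ⟨iv, v'⟩`. -/
def PR (v : ℝ → ℂ) (R : ℝ) : ℝ :=
  (1 / 2) * ∫ x in (-R)..R, rInner (Complex.I * v x) (deriv v x)

/-- The quantity whose limit mod `π` defines the untwisted momentum. -/
def upFun (v : ℝ → ℂ) (R : ℝ) : AddCircle (π : ℝ) :=
  ((PR v R - (1 / 2) * (Complex.arg (v R) - Complex.arg (v (-R))) : ℝ) : AddCircle (π : ℝ))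

/-- The untwisted momentum `[p](v) ∈ ℝ/πℤ`. -/
def up (v : ℝ → ℂ) : AddCircle (π : ℝ) := limUnder atTop (upFun v)

/-- The momentum `𝒫(v)` as an improper integral. -/
def mom (v : ℝ → ℂ) : ℝ := limUnder atTop (PR v)

/-- The distance `d_{A,X¹}`. -/
def dX1 (A : ℝ) (v₁ v₂ : ℝ → ℂ) : ℝ :=
  (⨆ x : Icc (-A) A, ‖v₁ x - v₂ x‖)
    + (∫ x, ‖deriv v₁ x - deriv v₂ x‖ ^ 2) ^ (1 / 2 : ℝ)
    + (∫ x, (‖v₁ x‖ - ‖v₂ x‖) ^ 2) ^ (1 / 2 : ℝ)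

/-- Membership in `H¹(ℝ, ℂ)`. -/
structure MemH1 (w : ℝ → ℂ) : Prop where
  diff : Differentiable ℝ w
  memL2 : MemLp w 2 volume
  deriv_memL2 : MemLp (deriv w) 2 volume

/-- `Ψ : ℝ → ℝ → ℂ` (time then space) solves the Gross-Pitaevskii equation
`i ∂_t Ψ + ∂_xx Ψ = Ψ (|Ψ|² - 1)`. -/
def IsGPSolution (Ψ : ℝ → ℝ → ℂ) : Prop :=
  ∀ t x, Complex.I * deriv (fun s => Ψ s x) t + deriv (deriv (Ψ t)) x
    = Ψ t x * ((‖Ψ t x‖ ^ 2 - 1 : ℝ) : ℂ)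

/-- Continuity of `t ↦ Ψ(·, t) - Ψ(·, t₀)` into `H¹(ℝ)`. -/
def H1ContinuousFlow (Ψ : ℝ → ℝ → ℂ) : Prop :=
  ∀ t₀ : ℝ, Tendsto (fun t => eLpNorm (fun x => Ψ t x - Ψ t₀ x) 2 volume
    + eLpNorm (fun x => deriv (Ψ t) x - deriv (Ψ t₀) x) 2 volume) (nhds t₀) (nhds 0)

def energyDensity (w : ℝ → ℂ) (x : ℝ) : ℝ :=
  (1 / 2) * ‖deriv w x‖ ^ 2 + (1 / 4) * ((1 : ℝ) - ‖w x‖ ^ 2) ^ 2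

namespace InX1

variable {w : ℝ → ℂ}

theorem integrable_sq_norm_deriv (hw : InX1 w) : Integrable fun x => ‖deriv w x‖ ^ 2 :=
  (memLp_two_iff_integrable_sq_norm hw.deriv_memL2.aestronglyMeasurable).1 hw.deriv_memL2

theorem integrable_sq_one_sub_sq_norm (hw : InX1 w) :
    Integrable fun x => ((1 : ℝ) - ‖w x‖ ^ 2) ^ 2 :=
  (memLp_two_iff_integrable_sq hw.gl_memL2.aestronglyMeasurable).1 hw.gl_memL2

theorem integrable_energyDensity (hw : InX1 w) : Integrable (energyDensity w) :=
  (hw.integrable_sq_norm_deriv.const_mul _).add (hw.integrable_sq_one_sub_sq_norm.const_mul _)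

theorem integral_energyDensity (hw : InX1 w) : ∫ x, energyDensity w x = energy w := by
  rw [energy, ← integral_const_mul, ← integral_const_mul,
    ← integral_add (hw.integrable_sq_norm_deriv.const_mul _)
      (hw.integrable_sq_one_sub_sq_norm.const_mul _)]
  rfl

end InX1

theorem hasDerivAt_ofReal_mul_cexp_ofReal_mul_I {ρ φ : ℝ → ℝ} {ρ' φ' x : ℝ}
    (hρ : HasDerivAt ρ ρ' x) (hφ : HasDerivAt φ φ' x) :
    HasDerivAt (fun y => (ρ y : ℂ) * Complex.exp (φ y * Complex.I))
      ((ρ' + ρ x * φ' * Complex.I) * Complex.exp (φ x * Complex.I)) x :=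
  (hρ.ofReal_comp.fun_mul (hφ.ofReal_comp.mul_const Complex.I).cexp).congr_deriv (by ring)

theorem sq_norm_deriv_ofReal_mul_cexp_ofReal_mul_I {ρ φ : ℝ → ℝ} {x : ℝ}
    (hρ : DifferentiableAt ℝ ρ x) (hφ : DifferentiableAt ℝ φ x) :
    ‖deriv (fun y => (ρ y : ℂ) * Complex.exp (φ y * Complex.I)) x‖ ^ 2
      = deriv ρ x ^ 2 + (ρ x * deriv φ x) ^ 2 := by
  rw [(hasDerivAt_ofReal_mul_cexp_ofReal_mul_I hρ.hasDerivAt hφ.hasDerivAt).deriv, norm_mul,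
    Complex.norm_exp_ofReal_mul_I, mul_one, Complex.sq_norm, ← Complex.ofReal_mul,
    Complex.normSq_add_mul_I]

theorem two_mul_sqrt_two_mul_mul_le (a b : ℝ) : 2 * √2 * a * b ≤ 2 * a ^ 2 + b ^ 2 := by
  nlinarith [sq_nonneg (√2 * a - b), sq_sqrt (zero_le_two : (0 : ℝ) ≤ 2)]

theorem sqrt_two_div_two_mul_mul_abs_le {m r r' s : ℝ} (hm : m ≤ |r|) :
    √2 / 2 * (m * |(r ^ 2 - 1) * s|)
      ≤ (1 / 2) * (r' ^ 2 + (r * s) ^ 2) + (1 / 4) * (1 - r ^ 2) ^ 2 := by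
  have h_le : m * |(r ^ 2 - 1) * s| ≤ |r * s| * |1 - r ^ 2| := by
    rw [abs_mul, abs_sub_comm, abs_mul]
    nlinarith [abs_nonneg (1 - r ^ 2), abs_nonneg s,
      mul_le_mul_of_nonneg_right hm (mul_nonneg (abs_nonneg (1 - r ^ 2)) (abs_nonneg s))]
  have h_amgm := two_mul_sqrt_two_mul_mul_le |r * s| |1 - r ^ 2|
  rw [sq_abs, sq_abs] at h_amgm
  nlinarith [sq_nonneg r', sqrt_nonneg 2]

theorem iInf_norm_mul_le_energy {v : ℝ → ℂ} (hv : InX1 v) {ρ φ : ℝ → ℝ}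
    (hρ : Differentiable ℝ ρ) (hφ : Differentiable ℝ φ)
    (hrep : ∀ x, v x = (ρ x : ℂ) * Complex.exp (φ x * Complex.I)) :
    (⨅ x, ‖v x‖) * (√2 * |(1 / 2) * ∫ x, (ρ x ^ 2 - 1) * deriv φ x|) ≤ energy v := by
  set m := ⨅ x, ‖v x‖
  have hm_nonneg : 0 ≤ m := le_ciInf fun x => norm_nonneg _
  have hnorm : ∀ x, ‖v x‖ = |ρ x| := fun x => by
    rw [hrep, norm_mul, Complex.norm_exp_ofReal_mul_I, mul_one, Complex.norm_real, norm_eq_abs]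
  have hm_le : ∀ x, m ≤ |ρ x| := fun x =>
    hnorm x ▸ ciInf_le ⟨0, by rintro _ ⟨y, rfl⟩; exact norm_nonneg _⟩ x
  have hdensity : ∀ x, energyDensity v x
      = (1 / 2) * (deriv ρ x ^ 2 + (ρ x * deriv φ x) ^ 2) + (1 / 4) * (1 - ρ x ^ 2) ^ 2 := by
    intro x
    rw [energyDensity, funext hrep, sq_norm_deriv_ofReal_mul_cexp_ofReal_mul_I (hρ x) (hφ x),
      ← funext hrep, hnorm, sq_abs]
  calc m * (√2 * |(1 / 2) * ∫ x, (ρ x ^ 2 - 1) * deriv φ x|)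
      ≤ m * (√2 * ((1 / 2) * ∫ x, |(ρ x ^ 2 - 1) * deriv φ x|)) := by
        rw [abs_mul, abs_of_pos one_half_pos]
        gcongr
        exact abs_integral_le_integral_abs
    _ = ∫ x, √2 / 2 * (m * |(ρ x ^ 2 - 1) * deriv φ x|) := by
        rw [integral_const_mul, integral_const_mul]
        ring
    _ ≤ ∫ x, energyDensity v x :=
        integral_mono_of_nonneg (.of_forall fun x => by positivity) hv.integrable_energyDensity
          (.of_forall fun x => hdensity x ▸ sqrt_two_div_two_mul_mul_abs_le (hm_le x))
    _ = energy v := hv.integral_energyDensity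

theorem inf_modulus_le_energy_div_momentum_general (v : ℝ → ℂ) (hv : InX1 v)
    (ρ φ : ℝ → ℝ)
    (hρ : Differentiable ℝ ρ) (hφ : Differentiable ℝ φ)
    (hrep : ∀ x, v x = (ρ x : ℂ) * Complex.exp (φ x * Complex.I))
    (P : ℝ) (hPdef : P = (1 / 2) * ∫ x, (ρ x ^ 2 - 1) * deriv φ x) (hP : P ≠ 0) :
    (⨅ x : ℝ, ‖v x‖) ≤ energy v / (Real.sqrt 2 * |P|) ∧
      (0 < 1 - energy v / (Real.sqrt 2 * |P|) →
        ∀ δ : ℝ, 0 < δ → δ < 1 - energy v / (Real.sqrt 2 * |P|) →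
          ∃ xδ : ℝ, δ ≤ 1 - ‖v xδ‖) := by
  have hbound := iInf_norm_mul_le_energy hv hρ hφ hrep
  rw [← hPdef] at hbound
  have hinf : (⨅ x : ℝ, ‖v x‖) ≤ energy v / (√2 * |P|) :=
    (le_div_iff₀ (by positivity)).2 hbound
  refine ⟨hinf, fun _ δ _ hδ => ?_⟩
  obtain ⟨x, hx⟩ := exists_lt_of_ciInf_lt (hinf.trans_lt (by linarith : _ < 1 - δ))
  exact ⟨x, by linarith⟩

/-- **Infimum of the modulus controlled by energy and momentum**: for a nowhere-vanishing
`v = ρ e^{iφ} ∈ X¹` with renormalized momentum `p(v) = (1/2)∫(ρ² - 1)φ' ≠ 0`,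
`inf |v| ≤ E(v) / (√2 |p(v)|)`. -/
theorem inf_modulus_le_energy_div_momentum (v : ℝ → ℂ) (hv : InX1 v)
    (ρ φ : ℝ → ℝ) (hρpos : ∀ x, 0 < ρ x)
    (hρ : Differentiable ℝ ρ) (hφ : Differentiable ℝ φ)
    (hrep : ∀ x, v x = (ρ x : ℂ) * Complex.exp (φ x * Complex.I))
    (P : ℝ) (hPdef : P = (1 / 2) * ∫ x, (ρ x ^ 2 - 1) * deriv φ x) (hP : P ≠ 0) :
    (⨅ x : ℝ, ‖v x‖) ≤ energy v / (Real.sqrt 2 * |P|) ∧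
      (0 < 1 - energy v / (Real.sqrt 2 * |P|) →
        ∀ δ : ℝ, 0 < δ → δ < 1 - energy v / (Real.sqrt 2 * |P|) →
          ∃ xδ : ℝ, δ ≤ 1 - ‖v xδ‖) :=
  inf_modulus_le_energy_div_momentum_general v hv ρ φ hρ hφ hrep P hPdef hP
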